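/- Let V ⊆ X be an open set and f a p-maximal continuous selection for 𝓕(X) for some point p ∈ V. If W = V \ {q} for some point q ∈ ⟨V⟩_f with q ≠ p, then f(X \ W) = q, the set [W]_f is clopen modulo the point q, and p ∈ ⟨W⟩_f ⊊ [W]_f ⊆ V. -/
import Mathlib


open Set Topology Filter

universe u v

/-- The hyperspace `𝓕(X)` of all nonempty closed subsets of a topological space `X`. -/
structure NEClosed (X : Type u) [TopologicalSpace X] : Type u where
  carrier : Set X
  nonempty' : carrier.Nonempty
  closed' : IsClosed carrier

namespace NEClosed

variable {X : Type u} [TopologicalSpace X]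

/-- The basic Vietoris set `⟨𝒱⟩` determined by a family `𝒱` of subsets of `X`. -/
def basicSet (𝒱 : Set (Set X)) : Set (NEClosed X) :=
  {S | S.carrier ⊆ ⋃₀ 𝒱 ∧ ∀ V ∈ 𝒱, (S.carrier ∩ V).Nonempty}

/-- The Vietoris topology on `𝓕(X)`, generated by the sets `⟨𝒱⟩` where `𝒱` runs over the
finite families of open subsets of `X`. -/
instance : TopologicalSpace (NEClosed X) :=
  TopologicalSpace.generateFrom
    {t | ∃ 𝒱 : Set (Set X), 𝒱.Finite ∧ (∀ V ∈ 𝒱, IsOpen V) ∧ t = basicSet 𝒱}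

/-- The trace of a nonempty closed set `S` on a subspace `A` which it meets, as a nonempty
closed subset of `A`. -/
def trace (S : NEClosed X) (A : Set X) (h : (S.carrier ∩ A).Nonempty) : NEClosed A where
  carrier := Subtype.val ⁻¹' S.carrier
  nonempty' := ⟨⟨h.choose, h.choose_spec.2⟩, h.choose_spec.1⟩
  closed' := S.closed'.preimage continuous_subtype_val

end NEClosed

/-- `f` is a Vietoris continuous selection for `𝓕(X)`. -/
def IsVSelection {X : Type u} [TopologicalSpace X] (f : NEClosed X → X) : Prop :=
  Continuous f ∧ ∀ S : NEClosed X, f S ∈ S.carrier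

/-- `f` is a `p`-maximal selection: `f S = p` whenever `p ∈ S`. -/
def PMaximal {X : Type u} [TopologicalSpace X] (f : NEClosed X → X) (p : X) : Prop :=
  ∀ S : NEClosed X, p ∈ S.carrier → f S = p

/-- `f` is a `p`-minimal selection: `f S ≠ p` whenever `S ≠ {p}`. -/
def PMinimal {X : Type u} [TopologicalSpace X] (f : NEClosed X → X) (p : X) : Prop :=
  ∀ S : NEClosed X, S.carrier ≠ {p} → f S ≠ p

/-- `H` is clopen modulo the point `p`: `H` is a nonempty closed set, `p ∈ H`, and
`H \ {p}` is open. -/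
def ClopenModulo {X : Type u} [TopologicalSpace X] (H : Set X) (p : X) : Prop :=
  H.Nonempty ∧ IsClosed H ∧ p ∈ H ∧ IsOpen (H \ {p})

/-- `Δ(X)`: the family of all nonempty closed subsets of `X` clopen modulo some point. -/
def DeltaSet (X : Type u) [TopologicalSpace X] : Set (Set X) :=
  {H | ∃ p, ClopenModulo H p}

/-- `Δ_ω(X)`: all `H ∈ Δ(X)` such that `H` is clopen, or `H` is clopen modulo a point `q`
at which `H` (with the subspace topology) has a countable neighbourhood base. -/
def DeltaOmegaSet (X : Type u) [TopologicalSpace X] : Set (Set X) :=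
  {H | H ∈ DeltaSet X ∧ (IsClopen H ∨ ∃ q, ∃ hq : q ∈ H,
    ClopenModulo H q ∧ (𝓝 (⟨q, hq⟩ : H)).IsCountablyGenerated)}

/-- The set `[V]_f = {x : f(Vᶜ ∪ {x}) = x}` for an open set `V`. -/
def bracketSel {X : Type u} [TopologicalSpace X] [T1Space X]
    (f : NEClosed X → X) (V : Set X) (hV : IsOpen V) : Set X :=
  {x | f ⟨Vᶜ ∪ {x}, ⟨x, Or.inr rfl⟩, hV.isClosed_compl.union isClosed_singleton⟩ = x}

/-- The set `⟨V⟩_f = [V]_f ∩ V` for an open set `V`. -/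
def angleSel {X : Type u} [TopologicalSpace X] [T1Space X]
    (f : NEClosed X → X) (V : Set X) (hV : IsOpen V) : Set X :=
  bracketSel f V hV ∩ V

/-- A quasi-ordinal decomposition of `X`: a continuous surjection onto a compact ordinal
space `[0, γ]` all of whose fibers are clopen modulo a point. -/
def IsQuasiOrdDecomp {X : Type u} [TopologicalSpace X] (γ : Ordinal.{u})
    (η : X → Set.Iic γ) : Prop :=
  Continuous η ∧ Function.Surjective η ∧ ∀ α : Set.Iic γ, η ⁻¹' {α} ∈ DeltaSet X

/-- An ordinal decomposition of `X`: a closed quotient map onto a compact ordinal space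
`[0, γ]` all of whose fibers are clopen modulo a point. -/
def IsOrdDecomp {X : Type u} [TopologicalSpace X] (γ : Ordinal.{u})
    (η : X → Set.Iic γ) : Prop :=
  IsQuotientMap η ∧ IsClosedMap η ∧ ∀ α : Set.Iic γ, η ⁻¹' {α} ∈ DeltaSet X

lemma NEClosed.ext' {X : Type u} [TopologicalSpace X] {S T : NEClosed X}
    (h : S.carrier = T.carrier) : S = T := by
  cases S; cases T; cases h; rfl

lemma continuous_insertFun {X : Type u} [TopologicalSpace X] [T1Space X]
    {C : Set X} (hC : IsClosed C) :
    Continuous (fun x : X => (⟨C ∪ {x}, ⟨x, Or.inr rfl⟩,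
      hC.union isClosed_singleton⟩ : NEClosed X)) := by
  apply continuous_generateFrom_iff.mpr
  rintro t ⟨𝒱, h𝒱fin, h𝒱open, rfl⟩
  by_cases hCU : C ⊆ ⋃₀ 𝒱
  · have heq : (fun x : X => (⟨C ∪ {x}, ⟨x, Or.inr rfl⟩,
        hC.union isClosed_singleton⟩ : NEClosed X)) ⁻¹' NEClosed.basicSet 𝒱
        = (⋃₀ 𝒱) ∩ ⋂ B ∈ 𝒱, {x | (C ∩ B).Nonempty ∨ x ∈ B} := by
      ext x
      simp only [NEClosed.basicSet, Set.mem_preimage, Set.mem_setOf_eq, Set.mem_inter_iff,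
        Set.mem_iInter, Set.union_subset_iff, Set.singleton_subset_iff]
      constructor
      · rintro ⟨⟨-, hx⟩, h2⟩
        refine ⟨hx, fun B hB => ?_⟩
        obtain ⟨y, hy1, hy2⟩ := h2 B hB
        rcases hy1 with h | h
        · exact Or.inl ⟨y, h, hy2⟩
        · exact Or.inr (h ▸ hy2)
      · rintro ⟨hx, h2⟩
        refine ⟨⟨hCU, hx⟩, fun B hB => ?_⟩
        rcases h2 B hB with ⟨y, hy⟩ | h
        · exact ⟨y, Or.inl hy.1, hy.2⟩
        · exact ⟨x, Or.inr rfl, h⟩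
    rw [heq]
    refine (isOpen_sUnion fun B hB => h𝒱open B hB).inter
      (h𝒱fin.isOpen_biInter fun B hB => ?_)
    by_cases h : (C ∩ B).Nonempty
    · have : {x : X | (C ∩ B).Nonempty ∨ x ∈ B} = Set.univ := by ext x; simp [h]
      rw [this]; exact isOpen_univ
    · have : {x : X | (C ∩ B).Nonempty ∨ x ∈ B} = B := by ext x; simp [h]
      rw [this]; exact h𝒱open B hB
  · have heq : (fun x : X => (⟨C ∪ {x}, ⟨x, Or.inr rfl⟩,
        hC.union isClosed_singleton⟩ : NEClosed X)) ⁻¹' NEClosed.basicSet 𝒱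
        = (∅ : Set X) := by
      ext x
      simp only [NEClosed.basicSet, Set.mem_preimage, Set.mem_setOf_eq, Set.mem_empty_iff_false,
        iff_false, not_and, Set.union_subset_iff]
      rintro ⟨h, -⟩
      exact absurd h hCU
    rw [heq]; exact isOpen_empty

lemma continuous_gfun {X : Type u} [TopologicalSpace X] [T1Space X] {f : NEClosed X → X}
    (hf : IsVSelection f) {V : Set X} (hV : IsOpen V) :
    Continuous (fun x : X => f ⟨Vᶜ ∪ {x}, ⟨x, Or.inr rfl⟩,
      hV.isClosed_compl.union isClosed_singleton⟩) :=
  hf.1.comp (continuous_insertFun hV.isClosed_compl)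

lemma isClosed_bracketSel {X : Type u} [TopologicalSpace X] [T2Space X] {f : NEClosed X → X}
    (hf : IsVSelection f) (V : Set X) (hV : IsOpen V) :
    IsClosed (bracketSel f V hV) :=
  isClosed_eq (continuous_gfun hf hV) continuous_id

lemma isOpen_angleSel {X : Type u} [TopologicalSpace X] [T2Space X] {f : NEClosed X → X}
    (hf : IsVSelection f) (V : Set X) (hV : IsOpen V) :
    IsOpen (angleSel f V hV) := by
  rw [isOpen_iff_mem_nhds]
  intro x hx
  have hgx : (fun x : X => f ⟨Vᶜ ∪ {x}, ⟨x, Or.inr rfl⟩,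
      hV.isClosed_compl.union isClosed_singleton⟩) x ∈ V := by
    have h1 : f ⟨Vᶜ ∪ {x}, ⟨x, Or.inr rfl⟩,
        hV.isClosed_compl.union isClosed_singleton⟩ = x := hx.1
    show f _ ∈ V
    rw [h1]; exact hx.2
  have h1 : (fun x : X => f ⟨Vᶜ ∪ {x}, ⟨x, Or.inr rfl⟩,
      hV.isClosed_compl.union isClosed_singleton⟩) ⁻¹' V ∈ 𝓝 x :=
    (continuous_gfun hf hV).continuousAt.preimage_mem_nhds (hV.mem_nhds hgx)
  filter_upwards [h1, hV.mem_nhds hx.2] with y hy1 hy2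
  refine ⟨?_, hy2⟩
  have hsel := hf.2 ⟨Vᶜ ∪ {y}, ⟨y, Or.inr rfl⟩, hV.isClosed_compl.union isClosed_singleton⟩
  rcases hsel with h | h
  · exact absurd hy1 h
  · exact h

/-- If `f` is a `p`-maximal continuous selection, `V` open with `p ∈ V`, and `W = V \ {q}` for
some `q ∈ ⟨V⟩_f` with `q ≠ p`, then `f(X \ W) = q`, `[W]_f` is clopen modulo `q`, and
`p ∈ ⟨W⟩_f ⊊ [W]_f ⊆ V`. -/
theorem stmt_7 {X : Type u} [TopologicalSpace X] [T2Space X]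
    (f : NEClosed X → X) (hf : IsVSelection f) (p : X) (hfp : PMaximal f p)
    (V : Set X) (hV : IsOpen V) (hpV : p ∈ V)
    (q : X) (hq : q ∈ angleSel f V hV) (hqp : q ≠ p) :
    f ⟨(V \ {q})ᶜ, ⟨q, fun h => h.2 rfl⟩, (hV.sdiff isClosed_singleton).isClosed_compl⟩ = q ∧
    ClopenModulo (bracketSel f (V \ {q}) (hV.sdiff isClosed_singleton)) q ∧
    p ∈ angleSel f (V \ {q}) (hV.sdiff isClosed_singleton) ∧
    angleSel f (V \ {q}) (hV.sdiff isClosed_singleton) ⊂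
      bracketSel f (V \ {q}) (hV.sdiff isClosed_singleton) ∧
    bracketSel f (V \ {q}) (hV.sdiff isClosed_singleton) ⊆ V := by
  have hW : IsOpen (V \ {q}) := hV.sdiff isClosed_singleton
  have hqV : q ∈ V := hq.2
  have hcar : (V \ {q})ᶜ = Vᶜ ∪ {q} := by
    ext x; simp only [Set.mem_compl_iff, Set.mem_diff, Set.mem_union, Set.mem_singleton_iff]
    tauto
  have hqWc : q ∈ (V \ {q})ᶜ := fun h => h.2 rfl
  have hSeq : (⟨(V \ {q})ᶜ, ⟨q, fun h => h.2 rfl⟩, hW.isClosed_compl⟩ : NEClosed X)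
      = ⟨Vᶜ ∪ {q}, ⟨q, Or.inr rfl⟩, hV.isClosed_compl.union isClosed_singleton⟩ :=
    NEClosed.ext' hcar
  have h1 : f ⟨(V \ {q})ᶜ, ⟨q, fun h => h.2 rfl⟩, hW.isClosed_compl⟩ = q := by
    rw [hSeq]; exact hq.1
  have hWc : ∀ x : X, x ∈ (V \ {q})ᶜ →
      (⟨(V \ {q})ᶜ ∪ {x}, ⟨x, Or.inr rfl⟩,
        hW.isClosed_compl.union isClosed_singleton⟩ : NEClosed X)
      = ⟨(V \ {q})ᶜ, ⟨q, fun h => h.2 rfl⟩, hW.isClosed_compl⟩ := fun x hx =>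
    NEClosed.ext' (Set.union_eq_self_of_subset_right (Set.singleton_subset_iff.mpr hx))
  have hqW : q ∈ bracketSel f (V \ {q}) hW := by
    show f _ = q
    rw [hWc q hqWc]; exact h1
  have hsub : bracketSel f (V \ {q}) hW ⊆ V := by
    intro x hx
    by_contra hxV
    have hxWc : x ∈ (V \ {q})ᶜ := fun h => hxV h.1
    have hx' : f ⟨(V \ {q})ᶜ ∪ {x}, ⟨x, Or.inr rfl⟩,
        hW.isClosed_compl.union isClosed_singleton⟩ = x := hx
    rw [hWc x hxWc, h1] at hx'
    exact hxV (hx' ▸ hqV)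
  have heqdiff : bracketSel f (V \ {q}) hW \ {q} = angleSel f (V \ {q}) hW := by
    ext x
    constructor
    · rintro ⟨hx, hxq⟩
      exact ⟨hx, hsub hx, hxq⟩
    · rintro ⟨hx, -, hxq⟩
      exact ⟨hx, hxq⟩
  refine ⟨h1, ⟨⟨q, hqW⟩, isClosed_bracketSel hf _ hW, hqW, ?_⟩, ?_, ?_, hsub⟩
  · rw [heqdiff]; exact isOpen_angleSel hf _ hW
  · refine ⟨hfp _ (Or.inr rfl), hpV, fun h => hqp h.symm⟩
  · refine ⟨Set.inter_subset_left, fun h => ?_⟩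
    exact (h hqW).2.2 rfl
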